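/- arXiv:1202.0305 — 2 statements merged into one kernel-verified Lean document; each statement's English description precedes it below -/
import Mathlib

section
/- (Theorem 3: outage probability for m_t+m_r > m.) Let m, m_t, m_r be natural numbers with m_t ≤ m, m_r ≤ m and m_t + m_r ≥ m, let ρ ≥ 0 and let r be a real number with r ≥ m_t+m_r−m. Then μ{H ∈ U(m) : |det(I_{m_t} + ρ·H₁₁ᴴ·H₁₁)| < (1+ρ)^r} = μ{H ∈ U(m) : |det(I_{m−m_r} + ρ·H₂₂·H₂₂ᴴ)| < (1+ρ)^(r−(m_t+m_r−m))}; that is, the outage probability at rate r·log(1+ρ) equals the outage probability of a Jacobi channel with m−m_r transmit and m−m_t receive modes at rate (r−(m_t+m_r−m))·log(1+ρ). -/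
open Matrix MeasureTheory

noncomputable section

instance (m : ℕ) : MeasurableSpace (Matrix.unitaryGroup (Fin m) ℂ) := borel _
instance (m : ℕ) : BorelSpace (Matrix.unitaryGroup (Fin m) ℂ) := ⟨rfl⟩

def sub11 {m : ℕ} (mt mr : ℕ) (hmt : mt ≤ m) (hmr : mr ≤ m)
    (H : Matrix (Fin m) (Fin m) ℂ) : Matrix (Fin mr) (Fin mt) ℂ :=
  Matrix.of fun i j => H (Fin.castLE hmr i) (Fin.castLE hmt j)

def sub22 {m : ℕ} (mt mr : ℕ) (H : Matrix (Fin m) (Fin m) ℂ) :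
    Matrix (Fin (m - mr)) (Fin (m - mt)) ℂ :=
  Matrix.of fun i j => H ⟨mr + i, by omega⟩ ⟨mt + j, by omega⟩

/-!
Write `U ∈ U(m)` in blocks `[[H₁₁, H₁₂], [H₂₁, H₂₂]]`. Orthonormality of the first `m_t` columns
gives `H₁₁ᴴH₁₁ = I - H₂₁ᴴH₂₁`, and orthonormality of the last `m - m_r` rows gives
`H₂₁H₂₁ᴴ = I - H₂₂H₂₂ᴴ`. Sylvester's identity `t^|q| det(tI - XY) = t^|n| det(tI - YX)`
(for `X : n × q`, `Y : q × n`) at `t = 1 + ρ` then yields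
`det(I + ρH₁₁ᴴH₁₁) = (1 + ρ)^(m_t + m_r - m) det(I + ρH₂₂H₂₂ᴴ)` for every `U`,
so the two outage events are the same set.
-/

namespace Matrix

variable {R : Type*} {l n p q k : Type*}

theorem pow_card_mul_det_smul_one_sub_mul_comm [CommRing R] [Fintype n] [Fintype q]
    [DecidableEq n] [DecidableEq q] (A : Matrix n q R) (B : Matrix q n R) (t : R) :
    t ^ Fintype.card q * (t • 1 - A * B).det = t ^ Fintype.card n * (t • 1 - B * A).det := by
  simpa [eval_charpoly, smul_one_eq_diagonal] using
    congrArg (Polynomial.eval t) (charpoly_mul_comm' A B)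

theorem pow_card_mul_det_one_add_smul_eq [CommRing R] [Fintype n] [Fintype q]
    [DecidableEq n] [DecidableEq q] {P : Matrix n n R} {Q : Matrix q q R}
    {X : Matrix n q R} {Y : Matrix q n R} (hP : P + X * Y = 1) (hQ : Y * X + Q = 1) (t : R) :
    (1 + t) ^ Fintype.card q * (1 + t • P).det = (1 + t) ^ Fintype.card n * (1 + t • Q).det := by
  have hP' : 1 + t • P = (1 + t) • 1 - (t • X) * Y := by
    rw [eq_sub_of_add_eq hP, Matrix.smul_mul]
    module
  have hQ' : 1 + t • Q = (1 + t) • 1 - Y * (t • X) := by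
    rw [eq_sub_of_add_eq' hQ, Matrix.mul_smul]
    module
  rw [hP', hQ', pow_card_mul_det_smul_one_sub_mul_comm]

variable [Fintype l] [Fintype p] [Fintype q] [NonUnitalNonAssocSemiring R] [StarRing R]

theorem conjTranspose_submatrix_mul_add (M : Matrix l n R) (e : p ⊕ q ≃ l) (f : k → n) :
    (M.submatrix (e ∘ Sum.inl) f)ᴴ * M.submatrix (e ∘ Sum.inl) f
      + (M.submatrix (e ∘ Sum.inr) f)ᴴ * M.submatrix (e ∘ Sum.inr) f
      = (Mᴴ * M).submatrix f f := by
  ext i j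
  simp only [add_apply, mul_apply, conjTranspose_apply, submatrix_apply, Function.comp_apply]
  rw [← Fintype.sum_sum_type (fun x => star (M (e x) (f i)) * M (e x) (f j))]
  exact e.sum_comp fun x => star (M x (f i)) * M x (f j)

theorem submatrix_mul_conjTranspose_add (M : Matrix n l R) (e : p ⊕ q ≃ l) (f : k → n) :
    M.submatrix f (e ∘ Sum.inl) * (M.submatrix f (e ∘ Sum.inl))ᴴ
      + M.submatrix f (e ∘ Sum.inr) * (M.submatrix f (e ∘ Sum.inr))ᴴ
      = (M * Mᴴ).submatrix f f := by
  simpa [conjTranspose_submatrix] using conjTranspose_submatrix_mul_add Mᴴ e f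

end Matrix

def finSumSubEquiv {k m : ℕ} (h : k ≤ m) : Fin k ⊕ Fin (m - k) ≃ Fin m :=
  finSumFinEquiv.trans (finCongr (Nat.add_sub_cancel' h))

theorem sub11_eq_submatrix {m mt mr : ℕ} (hmt : mt ≤ m) (hmr : mr ≤ m)
    (H : Matrix (Fin m) (Fin m) ℂ) :
    sub11 mt mr hmt hmr H
      = H.submatrix (finSumSubEquiv hmr ∘ Sum.inl) (finSumSubEquiv hmt ∘ Sum.inl) :=
  rfl

theorem sub22_eq_submatrix {m mt mr : ℕ} (hmt : mt ≤ m) (hmr : mr ≤ m)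
    (H : Matrix (Fin m) (Fin m) ℂ) :
    sub22 mt mr H
      = H.submatrix (finSumSubEquiv hmr ∘ Sum.inr) (finSumSubEquiv hmt ∘ Sum.inr) :=
  rfl

theorem pow_mul_det_one_add_smul_sub11 {m mt mr : ℕ} (hmt : mt ≤ m) (hmr : mr ≤ m)
    {U : Matrix (Fin m) (Fin m) ℂ} (hU : U ∈ unitaryGroup (Fin m) ℂ) (t : ℂ) :
    (1 + t) ^ (m - mr) * (1 + t • ((sub11 mt mr hmt hmr U)ᴴ * sub11 mt mr hmt hmr U)).det
      = (1 + t) ^ mt * (1 + t • (sub22 mt mr U * (sub22 mt mr U)ᴴ)).det := by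
  set B := U.submatrix (finSumSubEquiv hmr ∘ Sum.inr) (finSumSubEquiv hmt ∘ Sum.inl)
  have hcols : (sub11 mt mr hmt hmr U)ᴴ * sub11 mt mr hmt hmr U + Bᴴ * B = 1 := by
    rw [sub11_eq_submatrix, conjTranspose_submatrix_mul_add, ← star_eq_conjTranspose,
      mem_unitaryGroup_iff'.mp hU,
      submatrix_one _ ((finSumSubEquiv hmt).injective.comp Sum.inl_injective)]
  have hrows : B * Bᴴ + sub22 mt mr U * (sub22 mt mr U)ᴴ = 1 := by
    rw [sub22_eq_submatrix hmt hmr, submatrix_mul_conjTranspose_add, ← star_eq_conjTranspose,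
      mem_unitaryGroup_iff.mp hU,
      submatrix_one _ ((finSumSubEquiv hmr).injective.comp Sum.inr_injective)]
  simpa using pow_card_mul_det_one_add_smul_eq hcols hrows t

theorem det_one_add_smul_sub11 {m mt mr : ℕ} (hmt : mt ≤ m) (hmr : mr ≤ m)
    (hsum : m ≤ mt + mr) {U : Matrix (Fin m) (Fin m) ℂ} (hU : U ∈ unitaryGroup (Fin m) ℂ)
    {t : ℂ} (ht : 1 + t ≠ 0) :
    (1 + t • ((sub11 mt mr hmt hmr U)ᴴ * sub11 mt mr hmt hmr U)).det
      = (1 + t) ^ (mt + mr - m) * (1 + t • (sub22 mt mr U * (sub22 mt mr U)ᴴ)).det := by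
  have hmt' : mt = (m - mr) + (mt + mr - m) := by omega
  refine mul_left_cancel₀ (pow_ne_zero (m - mr) ht) ?_
  rw [pow_mul_det_one_add_smul_sub11 hmt hmr hU, ← mul_assoc, ← pow_add, ← hmt']

theorem pow_mul_lt_rpow_iff {a x r : ℝ} (ha : 0 < a) (n : ℕ) :
    a ^ n * x < a ^ r ↔ x < a ^ (r - n) := by
  rw [Real.rpow_sub ha, Real.rpow_natCast, lt_div_iff₀ (pow_pos ha n), mul_comm]

theorem outage_probability_of_sum_gt_general (m mt mr : ℕ) (hmt : mt ≤ m) (hmr : mr ≤ m)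
    (hsum : m ≤ mt + mr) (ρ : ℝ) (hρ : 0 ≤ ρ) (r : ℝ)
    (μ : Measure (Matrix.unitaryGroup (Fin m) ℂ)) :
    μ {U : Matrix.unitaryGroup (Fin m) ℂ |
        ‖(1 + (ρ : ℂ) • ((sub11 mt mr hmt hmr (U : Matrix (Fin m) (Fin m) ℂ))ᴴ
          * sub11 mt mr hmt hmr (U : Matrix (Fin m) (Fin m) ℂ))).det‖ < (1 + ρ) ^ r}
      = μ {U : Matrix.unitaryGroup (Fin m) ℂ |
          ‖(1 + (ρ : ℂ) • (sub22 mt mr (U : Matrix (Fin m) (Fin m) ℂ)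
            * (sub22 mt mr (U : Matrix (Fin m) (Fin m) ℂ))ᴴ)).det‖
            < (1 + ρ) ^ (r - ((mt + mr - m : ℕ) : ℝ))} := by
  have h1ρ : (0 : ℝ) < 1 + ρ := by linarith
  have hnorm : ‖(1 : ℂ) + ρ‖ = 1 + ρ := by
    rw [← Complex.ofReal_one, ← Complex.ofReal_add, Complex.norm_real, Real.norm_of_nonneg h1ρ.le]
  have hne : (1 : ℂ) + ρ ≠ 0 := by
    rw [← norm_ne_zero_iff, hnorm]
    exact h1ρ.ne'
  congr 1
  ext U
  rw [Set.mem_ofPred_eq, Set.mem_ofPred_eq, det_one_add_smul_sub11 hmt hmr hsum U.2 hne, norm_mul,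
    norm_pow, hnorm, pow_mul_lt_rpow_iff h1ρ]

/-- **Theorem 3 (outage probability for `m_t + m_r > m`).** Under the Haar
probability measure `μ` on `U(m)`, for a multiplexing rate `r ≥ m_t+m_r−m`,
the outage probability at rate `r·log(1+ρ)` equals the outage probability of a
Jacobi channel with `m−m_r` transmit and `m−m_t` receive modes at rate
`(r−(m_t+m_r−m))·log(1+ρ)`. -/
theorem outage_probability_of_sum_gt (m mt mr : ℕ) (hmt : mt ≤ m) (hmr : mr ≤ m)
    (hsum : m ≤ mt + mr) (ρ : ℝ) (hρ : 0 ≤ ρ) (r : ℝ) (hr : ((mt + mr - m : ℕ) : ℝ) ≤ r)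
    (μ : Measure (Matrix.unitaryGroup (Fin m) ℂ)) [μ.IsHaarMeasure] [IsProbabilityMeasure μ] :
    μ {U : Matrix.unitaryGroup (Fin m) ℂ |
        ‖(1 + (ρ : ℂ) • ((sub11 mt mr hmt hmr (U : Matrix (Fin m) (Fin m) ℂ))ᴴ
          * sub11 mt mr hmt hmr (U : Matrix (Fin m) (Fin m) ℂ))).det‖ < (1 + ρ) ^ r}
      = μ {U : Matrix.unitaryGroup (Fin m) ℂ |
          ‖(1 + (ρ : ℂ) • (sub22 mt mr (U : Matrix (Fin m) (Fin m) ℂ)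
            * (sub22 mt mr (U : Matrix (Fin m) (Fin m) ℂ))ᴴ)).det‖
            < (1 + ρ) ^ (r - ((mt + mr - m : ℕ) : ℝ))} :=
  outage_probability_of_sum_gt_general m mt mr hmt hmr hsum ρ hρ r μ
end
end

section
/- (Orthogonality of Jacobi polynomials.) Let α, β be nonnegative integers. For all natural numbers n, k, ∫_{−1}^{1} (1−x)^α (1+x)^β · P_n^{(α,β)}(x) · P_k^{(α,β)}(x) dx = a_{k,α,β} · δ_{nk}, where a_{k,α,β} = (2^{α+β+1}/(2k+α+β+1)) · C(2k+α+β, k) · C(2k+α+β, k+α)^{−1} and δ_{nk} is the Kronecker delta. -/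
open MeasureTheory

noncomputable section

/-- The Jacobi polynomial `P_k^{(α,β)}`, given by the Rodrigues formula
`P_k^{(α,β)}(x) = ((−1)^k/(2^k k!)) (1−x)^{−α} (1+x)^{−β}
  (d/dx)^k [(1−x)^{k+α} (1+x)^{k+β}]`. -/
def jacobiP (α β k : ℕ) (x : ℝ) : ℝ :=
  ((-1 : ℝ) ^ k / (2 ^ k * (Nat.factorial k))) * (1 - x) ^ (-(α : ℤ)) * (1 + x) ^ (-(β : ℤ))
    * iteratedDeriv k (fun y : ℝ => (1 - y) ^ (k + α) * (1 + y) ^ (k + β)) x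

/-- The normalization constant
`a_{k,α,β} = (2^{α+β+1}/(2k+α+β+1)) C(2k+α+β, k) C(2k+α+β, k+α)⁻¹`. -/
def aCoef (k α β : ℕ) : ℝ :=
  (2 ^ (α + β + 1) / (2 * k + α + β + 1)) * ((2 * k + α + β).choose k)
    * (((2 * k + α + β).choose (k + α) : ℝ))⁻¹

/-!
By Leibniz's rule the `n`-th derivative of `(1-x)^(n+α) (1+x)^(n+β)` is divisible by the weight
`w = (1-x)^α (1+x)^β`, so away from `±1` the Rodrigues formula is a polynomial `P_n` of degree at
most `n`, with leading coefficient `C(2n+α+β, n) / 2^n`. Integrating by parts `k` times, every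
boundary term vanishes because `(1-x)^(k+α) (1+x)^(k+β)` has zeros of order at least `k` at `±1`,
so `∫ w p P_k = (2^k k!)⁻¹ ∫ p^(k) (1-x)^(k+α) (1+x)^(k+β)` for every polynomial `p`. This
vanishes when `deg p < k`; for `p = P_k` the derivative `p^(k)` is the constant `k!` times the
leading coefficient, and the Beta integral `∫ (1-x)^a (1+x)^b = 2^(a+b+1) a! b! / (a+b+1)!` gives
the normalization.
-/

open Polynomial
open scoped Nat

namespace Polynomial

section Semiring

variable {R : Type*} [Semiring R]

theorem coeff_mul_natDegree_add {p q : R[X]} {n : ℕ} (hq : q.natDegree ≤ n) :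
    (p * q).coeff (p.natDegree + n) = p.leadingCoeff * q.coeff n := by
  rcases hq.eq_or_lt with rfl | hlt
  · exact coeff_mul_degree_add_degree p q
  · rw [coeff_eq_zero_of_natDegree_lt hlt, mul_zero]
    exact coeff_eq_zero_of_natDegree_lt (natDegree_mul_le.trans_lt (by omega))

theorem iterate_derivative_eq_C_of_natDegree_le {p : R[X]} {k : ℕ} (hp : p.natDegree ≤ k) :
    derivative^[k] p = C (k ! * p.coeff k) := by
  ext (_ | m)
  · simp [coeff_iterate_derivative, Nat.descFactorial_self, nsmul_eq_mul]
  · rw [coeff_iterate_derivative, coeff_eq_zero_of_natDegree_lt (by omega), coeff_C]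
    simp

end Semiring

theorem iteratedDeriv_eval {𝕜 : Type*} [NontriviallyNormedField 𝕜] (p : 𝕜[X]) (m : ℕ) :
    iteratedDeriv m (fun x => p.eval x) = fun x => (derivative^[m] p).eval x := by
  induction m generalizing p with
  | zero => rfl
  | succ m ih =>
    rw [iteratedDeriv_succ', Function.iterate_succ_apply, ← ih]
    congr
    funext x
    exact p.deriv

theorem integral_eval_mul_eval_derivative (u v : ℝ[X]) (a b : ℝ) :
    ∫ x in a..b, u.eval x * (derivative v).eval x =
      u.eval b * v.eval b - u.eval a * v.eval a - ∫ x in a..b, (derivative u).eval x * v.eval x :=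
  intervalIntegral.integral_mul_deriv_eq_deriv_mul (fun x _ => u.hasDerivAt x)
    (fun x _ => v.hasDerivAt x) ((derivative u).continuous.intervalIntegrable _ _)
    ((derivative v).continuous.intervalIntegrable _ _)

theorem integral_eval_mul_eval_iterate_derivative {a b : ℝ} (u v : ℝ[X]) (m : ℕ)
    (hv : ∀ i < m, (derivative^[i] v).eval a = 0 ∧ (derivative^[i] v).eval b = 0) :
    ∫ x in a..b, u.eval x * (derivative^[m] v).eval x =
      (-1) ^ m * ∫ x in a..b, (derivative^[m] u).eval x * v.eval x := by
  induction m generalizing u with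
  | zero => simp
  | succ m ih =>
    obtain ⟨hva, hvb⟩ := hv m m.lt_succ_self
    rw [Function.iterate_succ_apply', integral_eval_mul_eval_derivative, hva, hvb,
      ih _ fun i hi => hv i (hi.trans m.lt_succ_self), Function.iterate_succ_apply]
    ring

end Polynomial

theorem integral_one_sub_pow_succ_mul_one_add_pow (p q : ℕ) :
    (q + 1) * ∫ x in (-1:ℝ)..1, (1 - x) ^ (p + 1) * (1 + x) ^ q =
      (p + 1) * ∫ x in (-1:ℝ)..1, (1 - x) ^ p * (1 + x) ^ (q + 1) := by
  have h := integral_eval_mul_eval_derivative ((1 - X) ^ (p + 1)) ((1 + X) ^ (q + 1)) (-1) 1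
  simpa [derivative_pow, mul_comm, mul_left_comm, mul_assoc, intervalIntegral.integral_const_mul]
    using h

theorem integral_one_sub_pow_mul_one_add_pow (p q : ℕ) :
    ∫ x in (-1:ℝ)..1, (1 - x) ^ p * (1 + x) ^ q = 2 ^ (p + q + 1) * p ! * q ! / (p + q + 1)! := by
  induction p generalizing q with
  | zero =>
    simp only [pow_zero, one_mul, zero_add, Nat.factorial_zero, Nat.cast_one]
    rw [intervalIntegral.integral_comp_add_left (· ^ q), integral_pow, Nat.factorial_succ]
    push_cast
    field_simp
    norm_num
  | succ p ih =>
    have h := integral_one_sub_pow_succ_mul_one_add_pow p q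
    rw [ih, show p + (q + 1) + 1 = p + 1 + q + 1 by ring, Nat.factorial_succ q] at h
    rw [Nat.factorial_succ p]
    push_cast at h ⊢
    apply mul_left_cancel₀ (show (q : ℝ) + 1 ≠ 0 by positivity)
    rw [h]
    ring

def jacobiWeight (a b : ℕ) : ℝ[X] := (1 - X) ^ a * (1 + X) ^ b

@[simp]
theorem eval_jacobiWeight (a b : ℕ) (x : ℝ) :
    (jacobiWeight a b).eval x = (1 - x) ^ a * (1 + x) ^ b := by
  simp [jacobiWeight]

theorem jacobiWeight_ne_zero (a b : ℕ) : jacobiWeight a b ≠ 0 :=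
  fun h => by simpa using congrArg (eval 0) h

theorem natDegree_jacobiWeight (a b : ℕ) : (jacobiWeight a b).natDegree = a + b := by
  unfold jacobiWeight
  compute_degree!

theorem leadingCoeff_jacobiWeight (a b : ℕ) : (jacobiWeight a b).leadingCoeff = (-1) ^ a := by
  have h₁ : (1 - X : ℝ[X]).leadingCoeff = -1 := by
    rw [show (1 - X : ℝ[X]) = -(X - C 1) by simp, leadingCoeff_neg, leadingCoeff_X_sub_C]
  have h₂ : (1 + X : ℝ[X]).leadingCoeff = 1 := by
    rw [add_comm, ← C_1, leadingCoeff_X_add_C]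
  rw [jacobiWeight, leadingCoeff_mul, leadingCoeff_pow, leadingCoeff_pow, h₁, h₂, one_pow, mul_one]

theorem eval_one_iterate_derivative_jacobiWeight {a i : ℕ} (b : ℕ) (hi : i < a) :
    (derivative^[i] (jacobiWeight a b)).eval 1 = 0 := by
  have h := eval_dvd (x := 1) (pow_sub_dvd_iterate_derivative_of_pow_dvd i
    (dvd_mul_right ((1 - X : ℝ[X]) ^ a) ((1 + X) ^ b)))
  simpa [jacobiWeight, Nat.sub_ne_zero_of_lt hi] using h

theorem eval_neg_one_iterate_derivative_jacobiWeight (a : ℕ) {b i : ℕ} (hi : i < b) :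
    (derivative^[i] (jacobiWeight a b)).eval (-1) = 0 := by
  have h := eval_dvd (x := -1) (pow_sub_dvd_iterate_derivative_of_pow_dvd i
    (dvd_mul_left ((1 + X : ℝ[X]) ^ b) ((1 - X) ^ a)))
  simpa [jacobiWeight, Nat.sub_ne_zero_of_lt hi] using h

theorem jacobiWeight_dvd_iterate_derivative (α β n : ℕ) :
    jacobiWeight α β ∣ derivative^[n] (jacobiWeight (n + α) (n + β)) := by
  simp only [jacobiWeight]
  rw [iterate_derivative_mul]
  refine Finset.dvd_sum fun j hj => dvd_nsmul_of_dvd _ (mul_dvd_mul ?_ ?_) <;>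
    refine (pow_dvd_pow _ ?_).trans (pow_sub_dvd_iterate_derivative_pow _ _ _)
  · omega
  · have := Finset.mem_range.1 hj
    omega

/-- `/` is Euclidean division in `ℝ[X]`; it is exact by `jacobiWeight_dvd_iterate_derivative`. -/
def jacobiPoly (α β n : ℕ) : ℝ[X] :=
  C ((-1 : ℝ) ^ n / (2 ^ n * n !)) *
    (derivative^[n] (jacobiWeight (n + α) (n + β)) / jacobiWeight α β)

theorem jacobiWeight_mul_jacobiPoly (α β n : ℕ) :
    jacobiWeight α β * jacobiPoly α β n =
      C ((-1 : ℝ) ^ n / (2 ^ n * n !)) * derivative^[n] (jacobiWeight (n + α) (n + β)) := by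
  rw [jacobiPoly, mul_left_comm, EuclideanDomain.mul_div_cancel' (jacobiWeight_ne_zero α β)
    (jacobiWeight_dvd_iterate_derivative α β n)]

theorem jacobiP_eq_eval_jacobiPoly (α β n : ℕ) {x : ℝ} (h₁ : x ≠ 1) (h₂ : x ≠ -1) :
    jacobiP α β n x = (jacobiPoly α β n).eval x := by
  have hα : (1 - x) ^ α ≠ 0 := pow_ne_zero _ (sub_ne_zero.2 h₁.symm)
  have hβ : (1 + x) ^ β ≠ 0 := pow_ne_zero _ fun h => h₂ (by linarith)
  have hw : (jacobiWeight α β).eval x ≠ 0 := by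
    rw [eval_jacobiWeight]
    exact mul_ne_zero hα hβ
  have h := congrArg (eval x) (jacobiWeight_mul_jacobiPoly α β n)
  have hW : (fun y : ℝ => (1 - y) ^ (n + α) * (1 + y) ^ (n + β)) =
      fun y => (jacobiWeight (n + α) (n + β)).eval y := by
    simp
  rw [eval_mul, eval_mul, eval_C] at h
  rw [jacobiP, hW, iteratedDeriv_eval, zpow_neg, zpow_neg, zpow_natCast, zpow_natCast, eq_comm,
    ← mul_right_inj' hw, h]
  simp only [eval_jacobiWeight]
  field_simp

theorem jacobiP_ae_eq_eval_jacobiPoly (α β n : ℕ) :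
    jacobiP α β n =ᵐ[volume] fun x => (jacobiPoly α β n).eval x := by
  filter_upwards [(Set.toFinite {1, -1}).countable.ae_notMem volume] with x hx
  simp only [Set.mem_insert_iff, Set.mem_singleton_iff, not_or] at hx
  exact jacobiP_eq_eval_jacobiPoly α β n hx.1 hx.2

theorem natDegree_jacobiPoly_le (α β n : ℕ) : (jacobiPoly α β n).natDegree ≤ n := by
  rcases eq_or_ne (jacobiPoly α β n) 0 with h | h
  · simp [h]
  have hdeg := congrArg natDegree (jacobiWeight_mul_jacobiPoly α β n)
  rw [natDegree_mul (jacobiWeight_ne_zero α β) h, natDegree_jacobiWeight] at hdeg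
  have hR := natDegree_iterate_derivative (jacobiWeight (n + α) (n + β)) n
  rw [natDegree_jacobiWeight] at hR
  have := hdeg.trans_le ((natDegree_C_mul_le _ _).trans hR)
  omega

theorem coeff_jacobiPoly_self (α β n : ℕ) :
    (jacobiPoly α β n).coeff n = (2 * n + α + β).choose n / 2 ^ n := by
  have h := congrArg (coeff · (α + β + n)) (jacobiWeight_mul_jacobiPoly α β n)
  rw [← natDegree_jacobiWeight α β, coeff_mul_natDegree_add (natDegree_jacobiPoly_le α β n),
    leadingCoeff_jacobiWeight, coeff_C_mul, coeff_iterate_derivative, natDegree_jacobiWeight,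
    show α + β + n + n = (n + α) + (n + β) by ring, ← natDegree_jacobiWeight, coeff_natDegree,
    leadingCoeff_jacobiWeight, natDegree_jacobiWeight,
    show n + α + (n + β) = 2 * n + α + β by ring, Nat.descFactorial_eq_factorial_mul_choose,
    nsmul_eq_mul, pow_add] at h
  apply mul_left_cancel₀ (pow_ne_zero α (neg_ne_zero.2 (one_ne_zero (α := ℝ))))
  rw [h]
  push_cast
  field_simp
  rw [← pow_mul, pow_mul', neg_one_sq, one_pow, one_mul]

theorem integral_jacobiWeight_mul_eval_mul_eval_jacobiPoly (α β k : ℕ) (p : ℝ[X]) :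
    ∫ x in (-1:ℝ)..1, (1 - x) ^ α * (1 + x) ^ β * p.eval x * (jacobiPoly α β k).eval x =
      (∫ x in (-1:ℝ)..1,
        (derivative^[k] p).eval x * ((1 - x) ^ (k + α) * (1 + x) ^ (k + β))) / (2 ^ k * k !) := by
  set W := jacobiWeight (k + α) (k + β)
  have hq (x : ℝ) : (1 - x) ^ α * (1 + x) ^ β * (jacobiPoly α β k).eval x =
      (-1) ^ k / (2 ^ k * k !) * (derivative^[k] W).eval x := by
    rw [← eval_jacobiWeight, ← eval_mul, jacobiWeight_mul_jacobiPoly, eval_mul, eval_C]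
  have hW : ∀ i < k, (derivative^[i] W).eval (-1) = 0 ∧ (derivative^[i] W).eval 1 = 0 :=
    fun i hi => ⟨eval_neg_one_iterate_derivative_jacobiWeight _ (by omega),
      eval_one_iterate_derivative_jacobiWeight _ (by omega)⟩
  have hsign : (-1 : ℝ) ^ k * (-1) ^ k = 1 := by rw [← pow_add, Even.neg_one_pow ⟨k, rfl⟩]
  calc _ = ∫ x in (-1:ℝ)..1, (-1) ^ k / (2 ^ k * k !) * (p.eval x * (derivative^[k] W).eval x) :=
        intervalIntegral.integral_congr fun x _ => by rw [mul_right_comm, hq]; ring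
    _ = (-1) ^ k / (2 ^ k * k !) *
          ((-1) ^ k * ∫ x in (-1:ℝ)..1, (derivative^[k] p).eval x * W.eval x) := by
        rw [intervalIntegral.integral_const_mul, integral_eval_mul_eval_iterate_derivative p W k hW]
    _ = _ := by
        simp only [W, eval_jacobiWeight]
        rw [← mul_assoc, div_mul_eq_mul_div, hsign, one_div_mul_eq_div]

theorem integral_jacobiWeight_mul_eval_mul_eval_jacobiPoly_of_natDegree_lt (α β : ℕ) {k : ℕ}
    {p : ℝ[X]} (hp : p.natDegree < k) :
    ∫ x in (-1:ℝ)..1, (1 - x) ^ α * (1 + x) ^ β * p.eval x * (jacobiPoly α β k).eval x = 0 := by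
  simp [integral_jacobiWeight_mul_eval_mul_eval_jacobiPoly, iterate_derivative_eq_zero hp]

theorem integral_jacobiWeight_mul_eval_jacobiPoly_mul_eval_jacobiPoly_of_ne (α β : ℕ) {n k : ℕ}
    (h : n ≠ k) :
    ∫ x in (-1:ℝ)..1,
      (1 - x) ^ α * (1 + x) ^ β * (jacobiPoly α β n).eval x * (jacobiPoly α β k).eval x = 0 := by
  rcases h.lt_or_gt with h | h
  · exact integral_jacobiWeight_mul_eval_mul_eval_jacobiPoly_of_natDegree_lt α β
      ((natDegree_jacobiPoly_le α β n).trans_lt h)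
  · rw [← integral_jacobiWeight_mul_eval_mul_eval_jacobiPoly_of_natDegree_lt α β
      ((natDegree_jacobiPoly_le α β k).trans_lt h)]
    exact intervalIntegral.integral_congr fun x _ => mul_right_comm _ _ _

theorem integral_jacobiWeight_mul_eval_jacobiPoly_mul_self (α β k : ℕ) :
    ∫ x in (-1:ℝ)..1,
      (1 - x) ^ α * (1 + x) ^ β * (jacobiPoly α β k).eval x * (jacobiPoly α β k).eval x =
      aCoef k α β := by
  rw [integral_jacobiWeight_mul_eval_mul_eval_jacobiPoly,
    iterate_derivative_eq_C_of_natDegree_le (natDegree_jacobiPoly_le α β k), coeff_jacobiPoly_self]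
  simp only [eval_C]
  rw [intervalIntegral.integral_const_mul, integral_one_sub_pow_mul_one_add_pow, aCoef]
  have hk : k + α ≤ 2 * k + α + β := by omega
  have hchoose := Nat.choose_mul_factorial_mul_factorial hk
  rw [show 2 * k + α + β - (k + α) = k + β by omega] at hchoose
  have hpos : ((2 * k + α + β).choose (k + α) : ℝ) ≠ 0 := by
    exact_mod_cast (Nat.choose_pos hk).ne'
  rw [show k + α + (k + β) + 1 = 2 * k + α + β + 1 by ring, Nat.factorial_succ, ← hchoose]
  push_cast
  field_simp
  ring

/-- **Orthogonality of the Jacobi polynomials:**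
`∫_{−1}^{1} (1−x)^α (1+x)^β P_n^{(α,β)}(x) P_k^{(α,β)}(x) dx = a_{k,α,β} δ_{nk}`. -/
theorem jacobiP_orthogonality (α β n k : ℕ) :
    (∫ x in (-1:ℝ)..1, (1 - x) ^ α * (1 + x) ^ β * jacobiP α β n x * jacobiP α β k x)
      = if n = k then aCoef k α β else 0 := by
  have hP : ∀ᵐ x, x ∈ Set.uIoc (-1:ℝ) 1 →
      (1 - x) ^ α * (1 + x) ^ β * jacobiP α β n x * jacobiP α β k x =
        (1 - x) ^ α * (1 + x) ^ β * (jacobiPoly α β n).eval x * (jacobiPoly α β k).eval x := by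
    filter_upwards [jacobiP_ae_eq_eval_jacobiPoly α β n, jacobiP_ae_eq_eval_jacobiPoly α β k]
      with x hn hk _
    rw [hn, hk]
  rw [intervalIntegral.integral_congr_ae hP]
  split_ifs with h
  · subst h
    exact integral_jacobiWeight_mul_eval_jacobiPoly_mul_self α β n
  · exact integral_jacobiWeight_mul_eval_jacobiPoly_mul_eval_jacobiPoly_of_ne α β h
end
end
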